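/- arXiv:1409.6777 — 3 statements merged into one kernel-verified Lean document; each statement's English description precedes it below -/
import Mathlib

section
/- Let Q be a unitary on (C^2)^{⊗(l+1)} that commutes with ⊗_{j=1}^{l+1} X^{x_j} for every x ∈ {0,1}^{l+1}. Then for any z ∈ {0,1}^{l+1}, the probability Tr[|z⟩⟨z| · Q (|0⟩⟨0| ⊗ (I/2)^{⊗l}) Q†] equals (1/2^l) · Tr[(|z₁⟩⟨z₁| ⊗ I^{⊗l}) · Q (|0⟩⟨0|)^{⊗(l+1)} Q†]; in particular it depends on z only through its first bit z₁. -/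
open Matrix

/-! Commuting with every `X`-translation makes `Q` translation invariant, `Q a b = Q (a - b) 0`.
Hence the diagonal of `Q D Q†`, for `D` diagonal, is the convolution of `D` with the diagonal of
`Q |0⟩⟨0| Q†`; when `D` projects onto first bit `0`, that convolution only sees the first bit
of `z`. -/

namespace Matrix

variable {n R : Type*}

theorem commute_permMatrix_iff [Fintype n] [DecidableEq n] [NonAssocSemiring R]
    {M : Matrix n n R} {σ : Equiv.Perm n} :
    Commute M (σ.permMatrix R) ↔ M.submatrix σ σ = M := by
  rw [commute_iff_eq, PEquiv.mul_toMatrix_toPEquiv, PEquiv.toMatrix_toPEquiv_mul]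
  constructor
  · intro h
    ext i j
    simpa using (congrFun (congrFun h i) (σ j)).symm
  · intro h
    ext i j
    simpa using (congrFun (congrFun h i) (σ.symm j)).symm

theorem permMatrix_subRight_apply [AddGroup n] [DecidableEq n] [Zero R] [One R] (x a b : n) :
    Equiv.Perm.permMatrix R (Equiv.subRight x) a b = if a = b + x then 1 else 0 := by
  simp [eq_sub_iff_add_eq, eq_comm]

theorem mul_diagonal_mul_conjTranspose_apply_self [Fintype n] [DecidableEq n] [Semiring R]
    [StarRing R] (Q : Matrix n n R) (d : n → R) (i : n) :
    (Q * diagonal d * Qᴴ) i i = ∑ k, Q i k * d k * star (Q i k) := by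
  simp only [mul_apply (M := Q * diagonal d), mul_diagonal, conjTranspose_apply]

theorem mul_diagonal_single_mul_conjTranspose_apply_self [Fintype n] [DecidableEq n]
    [Semiring R] [StarRing R] (Q : Matrix n n R) (i j : n) :
    (Q * diagonal (Pi.single j 1 : n → R) * Qᴴ) i i = Q i j * star (Q i j) := by
  simp [mul_diagonal_mul_conjTranspose_apply_self, Pi.single_apply]

theorem apply_eq_apply_sub_zero [AddGroup n] {Q : Matrix n n R}
    (hQ : ∀ x, Q.submatrix (Equiv.subRight x) (Equiv.subRight x) = Q) (a b : n) :
    Q a b = Q (a - b) 0 := by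
  simpa using (congrFun (congrFun (hQ b) a) b).symm

theorem mul_diagonal_mul_conjTranspose_apply_self_eq_sum [AddCommGroup n] [Fintype n]
    [DecidableEq n] [CommSemiring R] [StarRing R] {Q : Matrix n n R}
    (hQ : ∀ x, Q.submatrix (Equiv.subRight x) (Equiv.subRight x) = Q) (d : n → R) (z : n) :
    (Q * diagonal d * Qᴴ) z z
      = ∑ y, d (z - y) * (Q * diagonal (Pi.single 0 1 : n → R) * Qᴴ) y y := by
  simp only [mul_diagonal_single_mul_conjTranspose_apply_self]
  rw [mul_diagonal_mul_conjTranspose_apply_self]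
  refine Fintype.sum_equiv (Equiv.subLeft z) _ _ fun k => ?_
  rw [Equiv.subLeft_apply, sub_sub_cancel, ← apply_eq_apply_sub_zero hQ]
  ring

end Matrix

theorem stmt6_general (l : ℕ)
    (Q : Matrix (Fin (l + 1) → Fin 2) (Fin (l + 1) → Fin 2) ℂ)
    (Xop : (Fin (l + 1) → Fin 2) →
      Matrix (Fin (l + 1) → Fin 2) (Fin (l + 1) → Fin 2) ℂ)
    (hXop : ∀ x, Xop x = fun a b => if a = (fun j => b j + x j) then (1 : ℂ) else 0)
    (hcomm : ∀ x : Fin (l + 1) → Fin 2, Q * Xop x = Xop x * Q)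
    (ρ : Matrix (Fin (l + 1) → Fin 2) (Fin (l + 1) → Fin 2) ℂ)
    (hρ : ρ = ((2 : ℂ) ^ l)⁻¹ •
      Matrix.diagonal (fun x => if x 0 = 0 then (1 : ℂ) else 0))
    (ket00 : Matrix (Fin (l + 1) → Fin 2) (Fin (l + 1) → Fin 2) ℂ)
    (hket00 : ket00 = Matrix.single (fun _ => 0) (fun _ => 0) (1 : ℂ)) :
    (∀ z : Fin (l + 1) → Fin 2,
      (Matrix.single z z (1 : ℂ) * (Q * ρ * Qᴴ)).trace
        = ((2 : ℂ) ^ l)⁻¹ *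
          ((Matrix.diagonal fun x : Fin (l + 1) → Fin 2 => if x 0 = z 0 then (1 : ℂ) else 0) *
            (Q * ket00 * Qᴴ)).trace) ∧
    (∀ z z' : Fin (l + 1) → Fin 2, z 0 = z' 0 →
      (Matrix.single z z (1 : ℂ) * (Q * ρ * Qᴴ)).trace
        = (Matrix.single z' z' (1 : ℂ) * (Q * ρ * Qᴴ)).trace) := by
  have hX : ∀ x, Xop x = Equiv.Perm.permMatrix ℂ (Equiv.subRight x) := fun x => by
    ext a b
    rw [hXop, permMatrix_subRight_apply]
    rfl
  have hinv : ∀ x, Q.submatrix (Equiv.subRight x) (Equiv.subRight x) = Q := fun x =>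
    commute_permMatrix_iff.mp (hX x ▸ hcomm x)
  have hprob : ∀ z : Fin (l + 1) → Fin 2,
      (Matrix.single z z (1 : ℂ) * (Q * ρ * Qᴴ)).trace
        = ((2 : ℂ) ^ l)⁻¹ *
          ((Matrix.diagonal fun x : Fin (l + 1) → Fin 2 => if x 0 = z 0 then (1 : ℂ) else 0) *
            (Q * ket00 * Qᴴ)).trace := by
    intro z
    rw [trace_single_mul, hρ, hket00, ← Pi.zero_def, ← diagonal_single, Matrix.mul_smul,
      Matrix.smul_mul, Matrix.smul_apply, mul_diagonal_mul_conjTranspose_apply_self_eq_sum hinv, trace]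
    simp [diagonal_mul, sub_eq_zero, eq_comm]
  exact ⟨hprob, fun z z' h => by rw [hprob z, hprob z', h]⟩

/-- If a unitary `Q` on `(l+1)` qubits commutes with every tensor product of
Pauli `X`'s, then the DQC1 output probability
`Tr[|z⟩⟨z| Q (|0⟩⟨0| ⊗ (I/2)^{⊗l}) Q†]` equals
`(1/2^l) Tr[(|z₁⟩⟨z₁| ⊗ I^{⊗l}) Q (|0⟩⟨0|)^{⊗(l+1)} Q†]`;
in particular it depends on `z` only through its first bit. -/
theorem stmt6 (l : ℕ)
    (Q : Matrix (Fin (l + 1) → Fin 2) (Fin (l + 1) → Fin 2) ℂ)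
    (hQ : Q ∈ Matrix.unitaryGroup (Fin (l + 1) → Fin 2) ℂ)
    (Xop : (Fin (l + 1) → Fin 2) →
      Matrix (Fin (l + 1) → Fin 2) (Fin (l + 1) → Fin 2) ℂ)
    (hXop : ∀ x, Xop x = fun a b => if a = (fun j => b j + x j) then (1 : ℂ) else 0)
    (hcomm : ∀ x : Fin (l + 1) → Fin 2, Q * Xop x = Xop x * Q)
    (ρ : Matrix (Fin (l + 1) → Fin 2) (Fin (l + 1) → Fin 2) ℂ)
    (hρ : ρ = ((2 : ℂ) ^ l)⁻¹ •
      Matrix.diagonal (fun x => if x 0 = 0 then (1 : ℂ) else 0))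
    (ket00 : Matrix (Fin (l + 1) → Fin 2) (Fin (l + 1) → Fin 2) ℂ)
    (hket00 : ket00 = Matrix.single (fun _ => 0) (fun _ => 0) (1 : ℂ)) :
    (∀ z : Fin (l + 1) → Fin 2,
      (Matrix.single z z (1 : ℂ) * (Q * ρ * Qᴴ)).trace
        = ((2 : ℂ) ^ l)⁻¹ *
          ((Matrix.diagonal fun x : Fin (l + 1) → Fin 2 => if x 0 = z 0 then (1 : ℂ) else 0) *
            (Q * ket00 * Qᴴ)).trace) ∧
    (∀ z z' : Fin (l + 1) → Fin 2, z 0 = z' 0 →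
      (Matrix.single z z (1 : ℂ) * (Q * ρ * Qᴴ)).trace
        = (Matrix.single z' z' (1 : ℂ) * (Q * ρ * Qᴴ)).trace) :=
  stmt6_general l Q Xop hXop hcomm ρ hρ ket00 hket00
end

section
/- If vertex 0 of a graph G has at least one neighbor, then the graph state |G'⟩ of the induced graph on the remaining vertices and the vector (⊗_{j : (0,j)∈E} Z_j)|G'⟩ are orthogonal: ⟨G'| (⊗_{(0,j)∈E} Z_j) |G'⟩ = 0. -/
open Matrix
open scoped Classical

/-- The graph state `|G⟩` in the computational basis. -/
noncomputable def graphState {V : Type*} [Fintype V] [LinearOrder V]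
    (G : SimpleGraph V) : (V → Fin 2) → ℂ := fun x =>
  ((Real.sqrt 2 : ℝ) : ℂ)⁻¹ ^ Fintype.card V *
    ∏ i, ∏ j, if i < j ∧ G.Adj i j ∧ x i = 1 ∧ x j = 1 then (-1 : ℂ) else 1

lemma star_graphState {V : Type*} [Fintype V] [LinearOrder V]
    (G : SimpleGraph V) (y : V → Fin 2) :
    star (graphState G y) = graphState G y := by
  unfold graphState
  rw [star_mul']
  congr 1
  · rw [← Complex.ofReal_inv, ← Complex.ofReal_pow, Complex.star_def, Complex.conj_ofReal]
  · rw [star_prod]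
    refine Finset.prod_congr rfl fun i _ => ?_
    rw [star_prod]
    refine Finset.prod_congr rfl fun j _ => ?_
    split <;> simp

lemma graphState_sq {V : Type*} [Fintype V] [LinearOrder V]
    (G : SimpleGraph V) (y : V → Fin 2) :
    graphState G y * graphState G y =
      (((Real.sqrt 2 : ℝ) : ℂ)⁻¹ ^ Fintype.card V) ^ 2 := by
  unfold graphState
  rw [mul_mul_mul_comm, ← sq, ← Finset.prod_mul_distrib]
  have : ∀ i ∈ Finset.univ, ((∏ j, if i < j ∧ G.Adj i j ∧ y i = 1 ∧ y j = 1 then (-1 : ℂ) else 1)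
      * ∏ j, if i < j ∧ G.Adj i j ∧ y i = 1 ∧ y j = 1 then (-1 : ℂ) else 1) = 1 := by
    intro i _
    rw [← Finset.prod_mul_distrib]
    refine Finset.prod_eq_one fun j _ => ?_
    split <;> norm_num
  rw [Finset.prod_congr rfl this, Finset.prod_const_one, mul_one]

/-- If vertex `0` of `G` has at least one neighbor, then the graph state
`|G'⟩` of the induced graph on `{1,…,l}` is orthogonal to `(⊗_{(0,j)∈E} Z_j)|G'⟩`:
`⟨G'| (⊗_{(0,j)∈E} Z_j) |G'⟩ = 0`. -/
theorem stmt11 (l : ℕ) (G : SimpleGraph (Fin (l + 1)))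
    (hnbr : ∃ j : Fin l, G.Adj 0 j.succ) :
    ∑ y : Fin l → Fin 2,
      star (graphState (G.comap Fin.succ) y) *
        (∏ j : Fin l, if G.Adj 0 j.succ ∧ y j = 1 then (-1 : ℂ) else 1) *
        graphState (G.comap Fin.succ) y = 0 := by
  obtain ⟨j0, hj0⟩ := hnbr
  set G' := G.comap (Fin.succ : Fin l → Fin (l + 1)) with hG'
  have hterm : ∀ y : Fin l → Fin 2,
      star (graphState G' y) *
        (∏ j : Fin l, if G.Adj 0 j.succ ∧ y j = 1 then (-1 : ℂ) else 1) *
        graphState G' y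
      = (((Real.sqrt 2 : ℝ) : ℂ)⁻¹ ^ Fintype.card (Fin l)) ^ 2 *
          ∏ j : Fin l, if G.Adj 0 j.succ ∧ y j = 1 then (-1 : ℂ) else 1 := by
    intro y
    rw [star_graphState, mul_right_comm, graphState_sq]
  rw [Finset.sum_congr rfl fun y _ => hterm y, ← Finset.mul_sum]
  have hsum : ∑ y : Fin l → Fin 2,
      ∏ j : Fin l, (if G.Adj 0 j.succ ∧ y j = 1 then (-1 : ℂ) else 1) = 0 := by
    rw [← Fintype.prod_sum fun (j : Fin l) (b : Fin 2) =>
      if G.Adj 0 j.succ ∧ b = 1 then (-1 : ℂ) else 1]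
    refine Finset.prod_eq_zero (Finset.mem_univ j0) ?_
    rw [Fin.sum_univ_two]
    have h0 : ¬ (G.Adj 0 j0.succ ∧ (0 : Fin 2) = 1) := by simp
    simp [hj0, h0]
  rw [hsum, mul_zero]
end

section
/- Acceptance probability of the NQP-to-DQC1 reduction circuit: let U be unitary on (C^2)^{⊗n}, Π₁ an orthogonal projection, and p = ‖Π₁ U |0⟩^{⊗n}‖². Define the unit vector φ = U†(I - 2Π₁)U|0⟩^{⊗n}. Then 1 - |⟨0^{⊗n}, φ⟩|² = 4p(1-p), and hence the probability (1/2^n)·(1 - |⟨0^{⊗n}, φ⟩|²) equals (4/2^n)·p(1-p). -/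
/-!
Since `Π₁` is an orthogonal projection, `Π₁ = Π₁ᴴ Π₁`, so the expectation of the reflection
`U†(I - 2Π₁)U` in the unit vector `|0⟩^{⊗n}` is `1 - 2‖Π₁ U |0⟩^{⊗n}‖² = 1 - 2p`, a real number.
Hence `1 - |⟨0^{⊗n}, φ⟩|² = 1 - (1 - 2p)² = 4p(1 - p)`.
-/

open Matrix

section

variable {m : Type*} [Fintype m]

theorem ofReal_re_star_dotProduct_self (v : m → ℂ) :
    (((star v ⬝ᵥ v).re : ℝ) : ℂ) = star v ⬝ᵥ v :=
  Complex.conj_eq_iff_re.mp (star_dotProduct v v).symm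

theorem star_dotProduct_conjTranspose_mulVec (A : Matrix m m ℂ) (v w : m → ℂ) :
    star v ⬝ᵥ (Aᴴ *ᵥ w) = star (A *ᵥ v) ⬝ᵥ w := by
  rw [star_mulVec, dotProduct_mulVec]

theorem star_dotProduct_mulVec_of_orthogonalProjection {P : Matrix m m ℂ}
    (hidem : P * P = P) (hsa : Pᴴ = P) (w : m → ℂ) :
    star w ⬝ᵥ (P *ᵥ w) = star (P *ᵥ w) ⬝ᵥ (P *ᵥ w) := by
  rw [← star_dotProduct_conjTranspose_mulVec, mulVec_mulVec, hsa, hidem]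

variable [DecidableEq m]

theorem star_dotProduct_self_mulVec_of_mem_unitaryGroup {U : Matrix m m ℂ}
    (hU : U ∈ unitaryGroup m ℂ) (v : m → ℂ) :
    star (U *ᵥ v) ⬝ᵥ (U *ᵥ v) = star v ⬝ᵥ v := by
  rw [← star_dotProduct_conjTranspose_mulVec, mulVec_mulVec, ← star_eq_conjTranspose,
    mem_unitaryGroup_iff'.mp hU, one_mulVec]

theorem star_dotProduct_reflection_mulVec {U P : Matrix m m ℂ} (hU : U ∈ unitaryGroup m ℂ)
    (hidem : P * P = P) (hsa : Pᴴ = P) (v : m → ℂ) :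
    star v ⬝ᵥ ((Uᴴ * (1 - (2 : ℂ) • P) * U) *ᵥ v)
      = star v ⬝ᵥ v - 2 * star (P *ᵥ (U *ᵥ v)) ⬝ᵥ (P *ᵥ (U *ᵥ v)) := by
  rw [← mulVec_mulVec, ← mulVec_mulVec, star_dotProduct_conjTranspose_mulVec, sub_mulVec,
    one_mulVec, smul_mulVec, dotProduct_sub, dotProduct_smul, smul_eq_mul,
    star_dotProduct_self_mulVec_of_mem_unitaryGroup hU,
    star_dotProduct_mulVec_of_orthogonalProjection hidem hsa]

end

theorem one_sub_norm_one_sub_two_mul_sq (p : ℝ) :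
    1 - ‖1 - 2 * (p : ℂ)‖ ^ 2 = 4 * p * (1 - p) := by
  rw [show (1 : ℂ) - 2 * p = ((1 - 2 * p : ℝ) : ℂ) by push_cast; ring, Complex.norm_real,
    Real.norm_eq_abs, sq_abs]
  ring

/-- Acceptance probability of the NQP-to-DQC1 reduction: with `U` unitary,
`Pr₁` an orthogonal projection, `p = ‖Pr₁ U |0⟩^{⊗n}‖²`, and
`φ = U†(I - 2Pr₁)U|0⟩^{⊗n}`, one has `1 - |⟨0^{⊗n}, φ⟩|² = 4p(1-p)`, hence
`(1/2^n)(1 - |⟨0^{⊗n}, φ⟩|²) = (4/2^n) p(1-p)`. -/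
theorem stmt15 (n : ℕ)
    (U : Matrix (Fin n → Fin 2) (Fin n → Fin 2) ℂ)
    (hU : U ∈ Matrix.unitaryGroup (Fin n → Fin 2) ℂ)
    (Pr₁ : Matrix (Fin n → Fin 2) (Fin n → Fin 2) ℂ)
    (hidem : Pr₁ * Pr₁ = Pr₁) (hsa : Pr₁ᴴ = Pr₁)
    (e0 : (Fin n → Fin 2) → ℂ)
    (he0 : e0 = fun x => if x = (fun _ => 0) then (1 : ℂ) else 0)
    (p : ℝ)
    (hp : p = ((star (Pr₁ *ᵥ (U *ᵥ e0))) ⬝ᵥ (Pr₁ *ᵥ (U *ᵥ e0))).re)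
    (φ : (Fin n → Fin 2) → ℂ)
    (hφ : φ = (Uᴴ * (1 - (2 : ℂ) • Pr₁) * U) *ᵥ e0) :
    1 - ‖star e0 ⬝ᵥ φ‖ ^ 2 = 4 * p * (1 - p) ∧
    ((2 : ℝ) ^ n)⁻¹ * (1 - ‖star e0 ⬝ᵥ φ‖ ^ 2)
      = 4 / 2 ^ n * (p * (1 - p)) := by
  have he0_unit : star e0 ⬝ᵥ e0 = 1 := by
    subst he0
    simp [dotProduct, apply_ite]
  have hexpect : star e0 ⬝ᵥ φ = 1 - 2 * (p : ℂ) := by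
    rw [hφ, star_dotProduct_reflection_mulVec hU hidem hsa, he0_unit, hp,
      ofReal_re_star_dotProduct_self]
  have hmain : 1 - ‖star e0 ⬝ᵥ φ‖ ^ 2 = 4 * p * (1 - p) := by
    rw [hexpect, one_sub_norm_one_sub_two_mul_sq]
  refine ⟨hmain, ?_⟩
  rw [hmain]
  ring
end
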